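/- arXiv:1501.01389 — 2 statements merged into one kernel-verified Lean document; each statement's English description precedes it below -/
import Mathlib

section
/- For a morphism f : X ⟶ Y of A, viewed as an object of Arrow(A), the following are equivalent: (a) f has the extension property along all kernel inclusions of counits: for every object g of Arrow(A) and every morphism φ : ker(ε_g) ⟶ f in Arrow(A), there exists ψ : FG(g) ⟶ f in Arrow(A) such that the kernel inclusion ker(ε_g) ⟶ FG(g) followed by ψ equals φ (i.e. f is E-injective); (b) f is a split epimorphism in A, i.e. there exists s : Y ⟶ X with s ≫ f = 𝟙_Y. -/
open CategoryTheory Limits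

universe w v u

variable (A : Type u) [Category.{v} A] [Abelian A]

/-- The functor `F : A × A ⥤ Arrow A` sending `(X, Y)` to the object
`biprod.inl : X ⟶ X ⊞ Y` of the arrow category. -/
@[simps]
noncomputable def ArrF : A × A ⥤ Arrow A where
  obj p := Arrow.mk (biprod.inl : p.1 ⟶ p.1 ⊞ p.2)
  map {p q} φ := Arrow.homMk (u := φ.1) (v := biprod.map φ.1 φ.2) (by simp)

/-- The forgetful functor `G : Arrow A ⥤ A × A` sending an object `f : X ⟶ Y` of the
arrow category to the pair `(X, Y)`. -/
@[simps]
def ArrG : Arrow A ⥤ A × A where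
  obj f := (f.left, f.right)
  map φ := (φ.left, φ.right)

variable {A}

/-- The counit morphism `ε_f : FG(f) ⟶ f`, whose domain component is `𝟙 X` and whose
codomain component is `biprod.desc f 𝟙 : X ⊞ Y ⟶ Y`. -/
noncomputable def arrCounit (f : Arrow A) : (ArrF A).obj ((ArrG A).obj f) ⟶ f :=
  Arrow.homMk (u := 𝟙 f.left) (v := biprod.desc f.hom (𝟙 f.right))
    (by exact (Category.id_comp _).trans (biprod.inl_desc _ _).symm)

/-!
The kernel of `ε_g : (X ⟶ X ⊞ Y) ⟶ (g : X ⟶ Y)` is computed componentwise: it is `0 ⟶ X`,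
included into `FG(g)` by `(0, lift 𝟙 (-g))`. A map from it to `f` is therefore just a morphism
`a : X ⟶ f.right`, and an extension is a pair `(u, v)` with `u ≫ f = inl ≫ v` and
`lift 𝟙 (-g) ≫ v = a`. Given a section `s` of `f`, take `(a ≫ s, fst ≫ a)`. Conversely, for
`g = 0 : Y ⟶ Y` the inclusion is `inl`, so extending `a = 𝟙 Y` yields `u` with `u ≫ f = 𝟙 Y`.
-/

section Biprod

variable {C : Type*} [Category C] [Preadditive C] [HasBinaryBiproducts C]

lemma biprod_lift_id_neg_comp_desc_id {X Y : C} (f : X ⟶ Y) :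
    biprod.lift (𝟙 X) (-f) ≫ biprod.desc f (𝟙 Y) = 0 := by
  simp

lemma comp_fst_comp_lift_id_neg_of_comp_desc_id {X Y W : C} (f : X ⟶ Y) (r : W ⟶ X ⊞ Y)
    (h : r ≫ biprod.desc f (𝟙 Y) = 0) : r ≫ biprod.fst ≫ biprod.lift (𝟙 X) (-f) = r := by
  apply biprod.hom_ext
  · simp
  · rw [← sub_eq_zero, ← neg_eq_zero, ← h]
    simp [biprod.desc_eq, add_comm]

end Biprod

/- The zero morphisms of an arbitrary `HasZeroMorphisms (Arrow C)` instance (such as the one carried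
by `[Abelian (Arrow A)]`) are componentwise zero, because such an instance is unique. -/

section ArrowZero

variable {C : Type*} [Category C] [Preadditive C] [HasZeroMorphisms (Arrow C)] {P Q : Arrow C}

lemma CategoryTheory.Arrow.Hom.zero_left_of_hasZeroMorphisms : (0 : P ⟶ Q).left = 0 := by
  obtain rfl := Subsingleton.elim ‹HasZeroMorphisms (Arrow C)›
    Preadditive.preadditiveHasZeroMorphisms
  rfl

lemma CategoryTheory.Arrow.Hom.zero_right_of_hasZeroMorphisms : (0 : P ⟶ Q).right = 0 := by
  obtain rfl := Subsingleton.elim ‹HasZeroMorphisms (Arrow C)›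
    Preadditive.preadditiveHasZeroMorphisms
  rfl

end ArrowZero

section Extension

variable {C : Type*} [Category C]

def HasExtensionsAlong {K B : C} (m : K ⟶ B) (X : C) : Prop :=
  ∀ φ : K ⟶ X, ∃ ψ : B ⟶ X, m ≫ ψ = φ

lemma hasExtensionsAlong_iff_of_iso {K K' B : C} (e : K ≅ K') {m : K ⟶ B} {m' : K' ⟶ B}
    (h : e.hom ≫ m' = m) (X : C) : HasExtensionsAlong m X ↔ HasExtensionsAlong m' X := by
  subst h
  refine ⟨fun H φ => ?_, fun H φ => ?_⟩
  · obtain ⟨ψ, hψ⟩ := H (e.hom ≫ φ)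
    exact ⟨ψ, by simpa using congrArg (e.inv ≫ ·) hψ⟩
  · obtain ⟨ψ, hψ⟩ := H (e.inv ≫ φ)
    exact ⟨ψ, by simp [hψ]⟩

end Extension

lemma arrCounit_left (g : Arrow A) : (arrCounit g).left = 𝟙 g.left := rfl

lemma arrCounit_right (g : Arrow A) :
    (arrCounit g).right = biprod.desc g.hom (𝟙 g.right) := rfl

open ZeroObject

namespace ArrowCounit

noncomputable def kernelObj (g : Arrow A) : Arrow A := Arrow.mk (0 : (0 : A) ⟶ g.left)

noncomputable def kernelι (g : Arrow A) : kernelObj g ⟶ (ArrF A).obj ((ArrG A).obj g) :=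
  Arrow.homMk (u := 0) (v := biprod.lift (𝟙 g.left) (-g.hom)) ((isZero_zero A).eq_of_src _ _)

lemma kernelι_right (g : Arrow A) :
    (kernelι g).right = biprod.lift (𝟙 g.left) (-g.hom) := rfl

section

variable [HasZeroMorphisms (Arrow A)]

lemma kernelι_comp_arrCounit (g : Arrow A) : kernelι g ≫ arrCounit g = 0 := by
  ext
  · exact (isZero_zero A).eq_of_src _ _
  · rw [Arrow.comp_right, Arrow.Hom.zero_right_of_hasZeroMorphisms, kernelι_right,
      arrCounit_right]
    exact biprod_lift_id_neg_comp_desc_id g.hom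

variable {g W : Arrow A} {k : W ⟶ (ArrF A).obj ((ArrG A).obj g)}

lemma left_eq_zero_of_comp_arrCounit_eq_zero (hk : k ≫ arrCounit g = 0) : k.left = 0 := by
  have h := congrArg Arrow.Hom.left hk
  rw [Arrow.comp_left, Arrow.Hom.zero_left_of_hasZeroMorphisms, arrCounit_left] at h
  exact (Category.comp_id _).symm.trans h

lemma right_comp_fst_comp_kernelι_right (hk : k ≫ arrCounit g = 0) :
    k.right ≫ biprod.fst ≫ (kernelι g).right = k.right := by
  have h := congrArg Arrow.Hom.right hk
  rw [Arrow.comp_right, Arrow.Hom.zero_right_of_hasZeroMorphisms, arrCounit_right] at h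
  exact comp_fst_comp_lift_id_neg_of_comp_desc_id g.hom k.right h

noncomputable def isLimitKernelFork (g : Arrow A) :
    IsLimit (KernelFork.ofι (kernelι g) (kernelι_comp_arrCounit g)) :=
  KernelFork.IsLimit.ofι _ _
    (fun {Z} k hk => Arrow.homMk (u := 0) (v := k.right ≫ biprod.fst) (by
      have hw : Z.hom ≫ k.right = 0 := by
        rw [← Arrow.w k, left_eq_zero_of_comp_arrCounit_eq_zero hk, zero_comp]
      exact zero_comp.trans ((reassoc_of% hw) biprod.fst |>.trans zero_comp).symm))
    (fun k hk => by
      ext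
      · exact zero_comp.trans (left_eq_zero_of_comp_arrCounit_eq_zero hk).symm
      · exact (Category.assoc _ _ _).trans (right_comp_fst_comp_kernelι_right hk))
    (fun {Z} k _ m hm => by
      subst hm
      ext
      · exact (isZero_zero A).eq_of_tgt _ _
      · have h (r : Z.right ⟶ g.left) : r ≫ biprod.lift (𝟙 g.left) (-g.hom) ≫ biprod.fst = r := by
          simp
        exact ((h m.right).symm.trans (Category.assoc _ _ _).symm))

end

variable (f : Arrow A)

lemma exists_section_of_hasExtensionsAlong_kernelι
    (h : ∀ g : Arrow A, HasExtensionsAlong (kernelι g) f) :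
    ∃ s : f.right ⟶ f.left, s ≫ f.hom = 𝟙 f.right := by
  obtain ⟨ψ, hψ⟩ := h (Arrow.mk (0 : f.right ⟶ f.right))
    (Arrow.homMk (u := 0) (v := 𝟙 f.right) ((isZero_zero A).eq_of_src _ _))
  have hinl : (biprod.inl : f.right ⟶ f.right ⊞ f.right) = biprod.lift (𝟙 f.right) (-0) := by
    ext <;> simp
  exact ⟨ψ.left, (Arrow.w ψ).trans ((congrArg (· ≫ ψ.right) hinl).trans
    (congrArg Arrow.Hom.right hψ))⟩

lemma hasExtensionsAlong_kernelι_of_section {s : f.right ⟶ f.left}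
    (hs : s ≫ f.hom = 𝟙 f.right) (g : Arrow A) : HasExtensionsAlong (kernelι g) f := by
  intro φ
  have hw (r : g.left ⟶ f.right) :
      (r ≫ s) ≫ f.hom = (biprod.inl : g.left ⟶ g.left ⊞ g.right) ≫ biprod.fst ≫ r := by
    simp [hs]
  have hfac (r : g.left ⟶ f.right) :
      biprod.lift (𝟙 g.left) (-g.hom) ≫ biprod.fst ≫ r = r := by
    simp
  refine ⟨Arrow.homMk (u := φ.right ≫ s) (v := biprod.fst ≫ φ.right) (hw φ.right), ?_⟩
  ext
  · exact (isZero_zero A).eq_of_src _ _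
  · exact hfac φ.right

end ArrowCounit

/-- an object `f : X ⟶ Y` of `Arrow A` has the extension property along
all kernel inclusions of counits `ker(ε_g) ⟶ FG(g)` (i.e. `f` is `E`-injective) if and
only if `f` is a split epimorphism in `A`, i.e. it admits a section. -/
theorem statement9 [Abelian (Arrow A)] (f : Arrow A) :
    (∀ (g : Arrow A) (φ : (kernel (arrCounit g) : Arrow A) ⟶ f),
        ∃ ψ : (ArrF A).obj ((ArrG A).obj g) ⟶ f, kernel.ι (arrCounit g) ≫ ψ = φ) ↔
      ∃ s : f.right ⟶ f.left, s ≫ f.hom = 𝟙 f.right := by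
  have hker (g : Arrow A) :
      HasExtensionsAlong (kernel.ι (arrCounit g)) f ↔
        HasExtensionsAlong (ArrowCounit.kernelι g) f :=
    hasExtensionsAlong_iff_of_iso
      ((kernelIsKernel _).conePointUniqueUpToIso (ArrowCounit.isLimitKernelFork g))
      ((kernelIsKernel _).conePointUniqueUpToIso_hom_comp _ WalkingParallelPair.zero) f
  exact (forall_congr' hker).trans
    ⟨ArrowCounit.exists_section_of_hasExtensionsAlong_kernelι f,
      fun ⟨_, hs⟩ => ArrowCounit.hasExtensionsAlong_kernelι_of_section f hs⟩
end

section
/- Let X, Y, V, W be objects of A and g : V ⟶ W a morphism, viewed as an object of Arrow(A). Then for every n ∈ ℕ there is an isomorphism of abelian groups Ext^n_{Arrow(A)}(F(X, Y), g) ≅ Ext^n_A(X, V) × Ext^n_A(Y, W), where F(X, Y) is the object biprod.inl : X ⟶ X ⊞ Y of Arrow(A). -/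
/-!
`F(X, Y)` is the biproduct in `Arrow A` of the arrows `𝟙 X` and `0 ⟶ Y`. These are the values
at `X` and `Y` of the left adjoints of the source and target functors `Arrow A ⥤ A`, and all four
functors are exact, so both adjunctions pass to the derived categories and hence to `Ext`:
`Ext^n(𝟙 X, g) ≅ Ext^n(X, V)` and `Ext^n(0 ⟶ Y, g) ≅ Ext^n(Y, W)`.
-/

open CategoryTheory Limits

universe w v u

variable (A : Type u) [Category.{v} A] [Abelian A]

variable {A}

open DerivedCategory ZeroObject

namespace CategoryTheory

namespace Adjunction

variable {C D : Type*} [Category* C] [Category* D]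

def mapHomologicalComplex [HasZeroMorphisms C] [HasZeroMorphisms D] {F : C ⥤ D} {G : D ⥤ C}
    [F.PreservesZeroMorphisms] [G.PreservesZeroMorphisms] (adj : F ⊣ G) {ι : Type*}
    (c : ComplexShape ι) : F.mapHomologicalComplex c ⊣ G.mapHomologicalComplex c where
  unit :=
    { app K :=
        { f i := adj.unit.app (K.X i)
          comm' i j _ := (adj.unit.naturality (K.d i j)).symm }
      naturality _ _ φ := by ext i; exact adj.unit.naturality (φ.f i) }
  counit :=
    { app K :=
        { f i := adj.counit.app (K.X i)
          comm' i j _ := (adj.counit.naturality (K.d i j)).symm }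
      naturality _ _ φ := by ext i; exact adj.counit.naturality (φ.f i) }
  left_triangle_components K := by ext i; exact adj.left_triangle_components (K.X i)
  right_triangle_components K := by ext i; exact adj.right_triangle_components (K.X i)

variable [Abelian C] [Abelian D] {F : C ⥤ D} {G : D ⥤ C}
  [F.Additive] [PreservesFiniteLimits F] [PreservesFiniteColimits F]
  [G.Additive] [PreservesFiniteLimits G] [PreservesFiniteColimits G]

noncomputable def mapDerivedCategory [HasDerivedCategory C] [HasDerivedCategory D]
    (adj : F ⊣ G) : F.mapDerivedCategory ⊣ G.mapDerivedCategory :=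
  letI : CatCommSq (F.mapHomologicalComplex (ComplexShape.up ℤ)) Q Q F.mapDerivedCategory :=
    ⟨F.mapDerivedCategoryFactors.symm⟩
  letI : CatCommSq (G.mapHomologicalComplex (ComplexShape.up ℤ)) Q Q G.mapDerivedCategory :=
    ⟨G.mapDerivedCategoryFactors.symm⟩
  (adj.mapHomologicalComplex _).localization Q (HomologicalComplex.quasiIso C _) Q
    (HomologicalComplex.quasiIso D _) _ _

/-- `Ext^n(F X, Y) ≃ Hom(F X, Y[n]) ≃ Hom(X, G (Y[n])) ≃ Hom(X, (G Y)[n]) ≃ Ext^n(X, G Y)`,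
computed in the derived categories. -/
noncomputable def extAddEquiv [HasExt.{w} C] [HasExt.{w} D] (adj : F ⊣ G) (X : C) (Y : D)
    (n : ℕ) : Abelian.Ext (F.obj X) Y n ≃+ Abelian.Ext X (G.obj Y) n :=
  letI := HasDerivedCategory.standard C
  letI := HasDerivedCategory.standard D
  Abelian.Ext.homAddEquiv.trans <|
    (Linear.homCongr ℤ ((F.mapDerivedCategorySingleFunctor 0).app X).symm
      (Iso.refl _)).toAddEquiv.trans <|
    (adj.mapDerivedCategory.homAddEquiv _ _).trans <|
    (Linear.homCongr ℤ (Iso.refl _) ((G.mapDerivedCategory.commShiftIso (n : ℤ)).app _ ≪≫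
      (shiftFunctor _ (n : ℤ)).mapIso
        ((G.mapDerivedCategorySingleFunctor 0).app Y))).toAddEquiv.trans
    Abelian.Ext.homAddEquiv.symm

end Adjunction

noncomputable def Abelian.Ext.binaryBiconeAddEquiv {C : Type*} [Category* C] [Abelian C]
    [HasExt.{w} C] {X₁ X₂ : C} {b : BinaryBicone X₁ X₂} (hb : b.IsBilimit) (Y : C) (n : ℕ) :
    Ext b.pt Y n ≃+ Ext X₁ Y n × Ext X₂ Y n :=
  (((extFunctor n).mapIso (biprod.uniqueUpToIso _ _ hb).symm.op).app
    Y).addCommGroupIsoToAddEquiv.trans Ext.biprodAddEquiv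

namespace Arrow

section

variable {C : Type*} [Category* C]

def identityFunc : C ⥤ Arrow C where
  obj X := Arrow.mk (𝟙 X)
  map f := Arrow.homMk f f

def identityFuncAdjLeftFunc : identityFunc ⊣ (leftFunc : Arrow C ⥤ C) where
  unit := 𝟙 (𝟭 C)
  counit :=
    { app f := Arrow.homMk (𝟙 f.left) f.hom
      naturality _ _ φ := by
        ext; exacts [(Category.comp_id _).trans (Category.id_comp _).symm, φ.w] }
  left_triangle_components _ := by ext <;> exact Category.id_comp _
  right_triangle_components _ := Category.id_comp _

def rightFuncAdjIdentityFunc : (rightFunc : Arrow C ⥤ C) ⊣ identityFunc where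
  unit :=
    { app f := Arrow.homMk f.hom (𝟙 f.right)
      naturality _ _ φ := by
        ext; exacts [φ.w, (Category.comp_id _).trans (Category.id_comp _).symm] }
  counit := 𝟙 (𝟭 C)
  left_triangle_components _ := Category.id_comp _
  right_triangle_components _ := by ext <;> exact Category.id_comp _

instance : (identityFunc : C ⥤ Arrow C).IsLeftAdjoint := identityFuncAdjLeftFunc.isLeftAdjoint

instance : (identityFunc : C ⥤ Arrow C).IsRightAdjoint := rightFuncAdjIdentityFunc.isRightAdjoint

instance : (leftFunc : Arrow C ⥤ C).IsRightAdjoint := identityFuncAdjLeftFunc.isRightAdjoint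

instance : (rightFunc : Arrow C ⥤ C).IsLeftAdjoint := rightFuncAdjIdentityFunc.isLeftAdjoint

variable [HasZeroMorphisms C] [HasZeroObject C]

noncomputable def fromZeroFunc : C ⥤ Arrow C where
  obj Y := Arrow.mk (0 : 0 ⟶ Y)
  map f := Arrow.homMk (𝟙 0) f

noncomputable def toZeroFunc : C ⥤ Arrow C where
  obj X := Arrow.mk (0 : X ⟶ 0)
  map f := Arrow.homMk f (𝟙 0)

noncomputable def fromZeroFuncAdjRightFunc : fromZeroFunc ⊣ (rightFunc : Arrow C ⥤ C) where
  unit := 𝟙 (𝟭 C)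
  counit :=
    { app f := Arrow.homMk 0 (𝟙 f.right) ((isZero_zero C).eq_of_src _ _)
      naturality _ _ φ := by
        ext
        exacts [(isZero_zero C).eq_of_src _ _,
          (Category.comp_id _).trans (Category.id_comp _).symm] }
  left_triangle_components _ := by
    ext; exacts [(isZero_zero C).eq_of_src _ _, Category.id_comp _]
  right_triangle_components _ := Category.id_comp _

noncomputable def leftFuncAdjToZeroFunc : (leftFunc : Arrow C ⥤ C) ⊣ toZeroFunc where
  unit :=
    { app f := Arrow.homMk (𝟙 f.left) 0 ((isZero_zero C).eq_of_tgt _ _)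
      naturality _ _ φ := by
        ext
        exacts [(Category.comp_id _).trans (Category.id_comp _).symm,
          (isZero_zero C).eq_of_tgt _ _] }
  counit := 𝟙 (𝟭 C)
  left_triangle_components _ := Category.id_comp _
  right_triangle_components _ := by
    ext; exacts [Category.id_comp _, (isZero_zero C).eq_of_tgt _ _]

instance : (leftFunc : Arrow C ⥤ C).IsLeftAdjoint := leftFuncAdjToZeroFunc.isLeftAdjoint

instance : (rightFunc : Arrow C ⥤ C).IsRightAdjoint := fromZeroFuncAdjRightFunc.isRightAdjoint

instance : (fromZeroFunc : C ⥤ Arrow C).IsLeftAdjoint := fromZeroFuncAdjRightFunc.isLeftAdjoint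

instance : (fromZeroFunc : C ⥤ Arrow C).PreservesMonomorphisms where
  preserves f _ := ⟨fun _ _ h => Arrow.hom_ext _ _ ((isZero_zero C).eq_of_tgt _ _)
    ((cancel_mono f).1 (congrArg CommaMorphism.right h))⟩

end

section

/- The abelian structure on `Arrow A` is an arbitrary instance, whose preadditive structure
need not be the componentwise one; hiding the latter makes all additivity below refer to it. -/
attribute [-instance] instPreadditiveArrow

variable [Abelian (Arrow A)]

instance : (leftFunc : Arrow A ⥤ A).Additive := Functor.additive_of_preserves_binary_products _

instance : (rightFunc : Arrow A ⥤ A).Additive := Functor.additive_of_preserves_binary_products _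

instance : (identityFunc : A ⥤ Arrow A).Additive :=
  Functor.additive_of_preserves_binary_products _

instance : (fromZeroFunc : A ⥤ Arrow A).Additive := fromZeroFuncAdjRightFunc.left_adjoint_additive

instance : PreservesFiniteLimits (fromZeroFunc : A ⥤ Arrow A) :=
  have := (fromZeroFunc : A ⥤ Arrow A).preservesHomology_of_preservesMonos_and_cokernels
  (fromZeroFunc : A ⥤ Arrow A).preservesFiniteLimits_of_preservesHomology

noncomputable def biprodInlBicone (X Y : A) :
    BinaryBicone (identityFunc.obj X) (fromZeroFunc.obj Y) where
  pt := Arrow.mk (biprod.inl : X ⟶ X ⊞ Y)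
  fst := Arrow.homMk (𝟙 X) biprod.fst ((Category.id_comp _).trans biprod.inl_fst.symm)
  snd := Arrow.homMk 0 biprod.snd (zero_comp.trans biprod.inl_snd.symm)
  inl := Arrow.homMk (𝟙 X) biprod.inl
  inr := Arrow.homMk 0 biprod.inr ((isZero_zero A).eq_of_src _ _)
  inl_fst := Arrow.hom_ext _ _ (Category.id_comp _) biprod.inl_fst
  inl_snd := Arrow.hom_ext _ _ ((isZero_zero A).eq_of_tgt _ _)
    (biprod.inl_snd.trans (rightFunc.map_zero (identityFunc.obj X) (fromZeroFunc.obj Y)).symm)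
  inr_fst := Arrow.hom_ext _ _ ((isZero_zero A).eq_of_src _ _)
    (biprod.inr_fst.trans (rightFunc.map_zero (fromZeroFunc.obj Y) (identityFunc.obj X)).symm)
  inr_snd := Arrow.hom_ext _ _ ((isZero_zero A).eq_of_src _ _) biprod.inr_snd

noncomputable def isBilimitBiprodInlBicone (X Y : A) : (biprodInlBicone X Y).IsBilimit :=
  isBinaryBilimitOfTotal _ <| Arrow.hom_ext _ _
    (leftFunc.map_add.trans (by show 𝟙 X ≫ 𝟙 X + (0 : X ⟶ 0) ≫ (0 : 0 ⟶ X) = 𝟙 X; simp))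
    (rightFunc.map_add.trans biprod.total)

end

end Arrow

end CategoryTheory

theorem statement15_general [HasExt.{w} A]
    [Abelian (Arrow A)] [HasExt.{w} (Arrow A)]
    (X Y V W : A) (g : V ⟶ W) (n : ℕ) :
    Nonempty (Abelian.Ext ((ArrF A).obj (X, Y)) (Arrow.mk g) n ≃+
      (Abelian.Ext X V n × Abelian.Ext Y W n)) :=
  ⟨(Abelian.Ext.binaryBiconeAddEquiv (Arrow.isBilimitBiprodInlBicone X Y) _ n).trans
    ((Arrow.identityFuncAdjLeftFunc.extAddEquiv X _ n).prodCongr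
      (Arrow.fromZeroFuncAdjRightFunc.extAddEquiv Y _ n))⟩

/-- for objects `X, Y, V, W` of `A` and a morphism `g : V ⟶ W` viewed as
an object of `Arrow A`, there is, for each `n : ℕ`, an isomorphism of abelian groups
`Ext^n_{Arrow A}(F(X, Y), g) ≅ Ext^n_A(X, V) × Ext^n_A(Y, W)`, where `F(X, Y)` is the
object `biprod.inl : X ⟶ X ⊞ Y` of `Arrow A`. -/
theorem statement15 [EnoughProjectives A] [HasExt.{w} A]
    [Abelian (Arrow A)] [HasExt.{w} (Arrow A)]
    (X Y V W : A) (g : V ⟶ W) (n : ℕ) :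
    Nonempty (Abelian.Ext ((ArrF A).obj (X, Y)) (Arrow.mk g) n ≃+
      (Abelian.Ext X V n × Abelian.Ext Y W n)) :=
  statement15_general X Y V W g n
end
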